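/- arXiv:0904.1192 — 2 statements merged into one kernel-verified Lean document; each statement's English description precedes it below -/
import Mathlib

section
/- Let V be a real vector space of dimension m ≥ 2 and let ρ_a be an antisymmetric bilinear form on V. Define A(x,y)z := (-1/(1+m))·(2ρ_a(x,y)z + ρ_a(x,z)y - ρ_a(y,z)x). Then A is an affine algebraic curvature operator (antisymmetric and satisfying the first Bianchi identity) whose Ricci tensor Tr(z ↦ A(z,x)y) equals ρ_a(x,y). -/
/-!
Write `S(x,y)z = 2ρ(x,y)z + ρ(x,z)y - ρ(y,z)x`. Antisymmetry of `S` in `x, y` and the cyclic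
identity are direct consequences of the antisymmetry of `ρ`. The endomorphism `z ↦ S(z,x)y`
is `2 ρ(·,x) ⊗ y + ρ(·,y) ⊗ x - ρ(x,y) id`, whose trace is `2ρ(y,x) + ρ(x,y) - m ρ(x,y)
= -(1 + m) ρ(x,y)`; the factor `-1/(1+m)` normalises this to `ρ(x,y)`.
-/

namespace LinearMap

variable {R M : Type*} [CommRing R] [AddCommGroup M] [Module R M]

def skewSplit (ρ : M →ₗ[R] M →ₗ[R] R) (x y z : M) : M :=
  (2 : R) • (ρ x y • z) + ρ x z • y - ρ y z • x

def skewSplitRicci (ρ : M →ₗ[R] M →ₗ[R] R) (x y : M) : M →ₗ[R] M :=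
  (2 : R) • (ρ.flip x).smulRight y + (ρ.flip y).smulRight x - ρ x y • LinearMap.id

variable {ρ : M →ₗ[R] M →ₗ[R] R}

theorem skewSplit_swap (hρ : ∀ x y, ρ x y = -ρ y x) (x y z : M) :
    skewSplit ρ y x z = -skewSplit ρ x y z := by
  rw [skewSplit, skewSplit, hρ y x]
  module

theorem skewSplit_add_add (hρ : ∀ x y, ρ x y = -ρ y x) (x y z : M) :
    skewSplit ρ x y z + skewSplit ρ y z x + skewSplit ρ z x y = 0 := by
  simp only [skewSplit]
  rw [hρ y x, hρ z x, hρ z y]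
  module

theorem skewSplitRicci_apply (ρ : M →ₗ[R] M →ₗ[R] R) (x y z : M) :
    skewSplitRicci ρ x y z = skewSplit ρ z x y := by
  simp only [skewSplitRicci, skewSplit, sub_apply, add_apply, smul_apply, smulRight_apply,
    flip_apply, id_apply]

theorem trace_skewSplitRicci [Module.Free R M] [Module.Finite R M]
    (hρ : ∀ x y, ρ x y = -ρ y x) (x y : M) :
    trace R M (skewSplitRicci ρ x y) = -(1 + Module.finrank R M) * ρ x y := by
  simp only [skewSplitRicci, map_sub, map_add, map_smul, trace_smulRight, trace_id,
    flip_apply, smul_eq_mul]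
  rw [hρ y x]
  ring

end LinearMap

theorem stmt1_general {V : Type*} [AddCommGroup V] [Module ℝ V] [FiniteDimensional ℝ V]
    (ρa : V →ₗ[ℝ] V →ₗ[ℝ] ℝ) (hρa : ∀ x y, ρa x y = - ρa y x)
    (A : V → V → V → V)
    (hA : ∀ x y z, A x y z =
      (-1 / (1 + (Module.finrank ℝ V : ℝ))) •
        ((2 : ℝ) • (ρa x y • z) + ρa x z • y - ρa y z • x)) :
    (∀ x y z, A x y z = - A y x z) ∧
    (∀ x y z, A x y z + A y z x + A z x y = 0) ∧
    (∀ x y, ∀ L : V →ₗ[ℝ] V, (∀ z, L z = A z x y) →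
      LinearMap.trace ℝ V L = ρa x y) := by
  set c : ℝ := -1 / (1 + (Module.finrank ℝ V : ℝ)) with hc
  have hA' : ∀ x y z, A x y z = c • LinearMap.skewSplit ρa x y z := hA
  refine ⟨fun x y z => ?_, fun x y z => ?_, fun x y L hL => ?_⟩
  · rw [hA', hA', LinearMap.skewSplit_swap hρa x y, smul_neg, neg_neg]
  · rw [hA', hA', hA', ← smul_add, ← smul_add, LinearMap.skewSplit_add_add hρa, smul_zero]
  · have hL' : L = c • LinearMap.skewSplitRicci ρa x y := by
      ext z
      rw [hL, hA', LinearMap.smul_apply, LinearMap.skewSplitRicci_apply]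
    have hm : (1 + (Module.finrank ℝ V : ℝ)) ≠ 0 := by positivity
    rw [hL', map_smul, LinearMap.trace_skewSplitRicci hρa, smul_eq_mul, hc]
    field_simp

/-- The splitting `σ ρ_a` of an antisymmetric Ricci tensor is an affine
algebraic curvature operator with Ricci tensor `ρ_a`. -/
theorem stmt1 {V : Type*} [AddCommGroup V] [Module ℝ V] [FiniteDimensional ℝ V]
    (hm : 2 ≤ Module.finrank ℝ V)
    (ρa : V →ₗ[ℝ] V →ₗ[ℝ] ℝ) (hρa : ∀ x y, ρa x y = - ρa y x)
    (A : V → V → V → V)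
    (hA : ∀ x y z, A x y z =
      (-1 / (1 + (Module.finrank ℝ V : ℝ))) •
        ((2 : ℝ) • (ρa x y • z) + ρa x z • y - ρa y z • x)) :
    (∀ x y z, A x y z = - A y x z) ∧
    (∀ x y z, A x y z + A y z x + A z x y = 0) ∧
    (∀ x y, ∀ L : V →ₗ[ℝ] V, (∀ z, L z = A z x y) →
      LinearMap.trace ℝ V L = ρa x y) :=
  stmt1_general ρa hρa A hA
end

section
/- Let φ be a self-adjoint orthogonal map of a positive definite inner product space V (so φ² = id and ⟨φx,φy⟩ = ⟨x,y⟩). Then for every orthonormal pair {x,y}, the operator R(x,y)z := ⟨φx,z⟩φy - ⟨φy,z⟩φx is such that R(x,y)² has eigenvalues {-1, -1, 0, …, 0}; in particular the eigenvalues of R(x,y) are independent of the oriented 2-plane span{x,y}, i.e., (V, ⟨·,·⟩, A_φ) is an Ivanov–Petrova curvature model. -/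
open scoped RealInnerProductSpace

/-- For a self-adjoint orthogonal map `φ` (so `φ² = id`,
`⟨φx,φy⟩ = ⟨x,y⟩`) of a positive definite inner product space and any orthonormal pair
`{x,y}`, the operator `R(x,y)z = ⟨φx,z⟩φy - ⟨φy,z⟩φx` satisfies `R(x,y)² = -id` on
`span{φx,φy}` and vanishes on its orthogonal complement, i.e. `R(x,y)²` has eigenvalues
`{-1,-1,0,…,0}` independently of the oriented 2-plane `span{x,y}`; so
`(V,⟨·,·⟩,A_φ)` is an Ivanov–Petrova curvature model. -/
theorem stmt13 {V : Type*} [NormedAddCommGroup V] [InnerProductSpace ℝ V]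
    [FiniteDimensional ℝ V]
    (φ : V →ₗ[ℝ] V) (hφsa : ∀ x y, ⟪φ x, y⟫ = ⟪x, φ y⟫) (hφ2 : ∀ x, φ (φ x) = x)
    (hφorth : ∀ x y, ⟪φ x, φ y⟫ = ⟪x, y⟫)
    (x y : V) (hx : ‖x‖ = 1) (hy : ‖y‖ = 1) (hxy : ⟪x, y⟫ = 0)
    (R : V → V) (hR : ∀ z, R z = ⟪φ x, z⟫ • φ y - ⟪φ y, z⟫ • φ x) :
    (∀ z ∈ Submodule.span ℝ ({φ x, φ y} : Set V), R (R z) = -z) ∧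
    (∀ z, ⟪φ x, z⟫ = 0 → ⟪φ y, z⟫ = 0 → R z = 0) := by
  have hxx : ⟪φ x, φ x⟫ = 1 := by
    rw [hφorth, real_inner_self_eq_norm_sq, hx]; norm_num
  have hyy : ⟪φ y, φ y⟫ = 1 := by
    rw [hφorth, real_inner_self_eq_norm_sq, hy]; norm_num
  have hxy' : ⟪φ x, φ y⟫ = 1 * ⟪x, y⟫ := by rw [hφorth]; ring
  have hyx' : ⟪φ y, φ x⟫ = ⟪x, y⟫ := by rw [hφorth, real_inner_comm]
  constructor
  · intro z hz
    rw [Submodule.mem_span_pair] at hz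
    obtain ⟨a, b, rfl⟩ := hz
    have h1 : R (a • φ x + b • φ y) = a • φ y - b • φ x := by
      rw [hR]
      simp only [inner_add_right, inner_smul_right, hxx, hyy]
      rw [hxy', hyx', hxy]
      module
    rw [h1, hR]
    simp only [inner_sub_right, inner_smul_right, hxx, hyy]
    rw [hxy', hyx', hxy]
    module
  · intro z h1 h2
    rw [hR, h1, h2]
    simp
end
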